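/- arXiv:1112.4832 — 6 statements merged into one kernel-verified Lean document; each statement's English description precedes it below -/
import Mathlib

section
/- The group of order-preserving group automorphisms of ℤ × ℤ with the lexicographic order is isomorphic to ℤ: every such automorphism has the form (x, y) ↦ (x, y + kx) for a unique k ∈ ℤ. -/
/-!
Multiples of `(0, 1)` all lie below `(1, 0)`, and a monotone additive map preserves this, so
`φ (0, 1)` has first coordinate `0`: the matrix of `φ` is lower triangular,
`(x, y) ↦ (a x, b x + d y)`.
Surjectivity makes `a` and `d` units of `ℤ`, and monotonicity makes them nonnegative, so
`a = d = 1` and `φ` is the shear with parameter `b = (φ (1, 0)).2`.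
-/

def lexLeZZ (u v : ℤ × ℤ) : Prop := u.1 < v.1 ∨ (u.1 = v.1 ∧ u.2 ≤ v.2)

theorem lexLeZZ.fst_le {u v : ℤ × ℤ} (h : lexLeZZ u v) : u.1 ≤ v.1 :=
  h.elim le_of_lt fun h => h.1.le

theorem lexLeZZ.snd_le {u v : ℤ × ℤ} (h : lexLeZZ u v) (hfst : u.1 = v.1) : u.2 ≤ v.2 :=
  (h.resolve_left (hfst ▸ lt_irrefl _)).2

def shearZZ (k : ℤ) : (ℤ × ℤ) ≃+ (ℤ × ℤ) where
  toFun p := (p.1, p.2 + k * p.1)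
  invFun p := (p.1, p.2 - k * p.1)
  left_inv p := by simp
  right_inv p := by simp
  map_add' p q := Prod.ext rfl (by dsimp; ring)

theorem shearZZ_apply (k : ℤ) (p : ℤ × ℤ) : shearZZ k p = (p.1, p.2 + k * p.1) := rfl

theorem shearZZ_add (k l : ℤ) : shearZZ (k + l) = (shearZZ k).trans (shearZZ l) := by
  ext p <;> simp only [AddEquiv.trans_apply, shearZZ_apply]
  ring

theorem shearZZ_injective : Function.Injective shearZZ := fun k l h => by
  simpa [shearZZ_apply] using congrArg (fun ψ : (ℤ × ℤ) ≃+ (ℤ × ℤ) => (ψ (1, 0)).2) h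

theorem lexLeZZ_shearZZ_iff (k : ℤ) (u v : ℤ × ℤ) :
    lexLeZZ (shearZZ k u) (shearZZ k v) ↔ lexLeZZ u v :=
  or_congr_right <| and_congr_right fun hfst => by
    simp only [shearZZ_apply] at hfst ⊢
    rw [hfst]
    omega

theorem Int.eq_zero_of_forall_mul_le {a b : ℤ} (h : ∀ n : ℤ, n * a ≤ b) : a = 0 := by
  by_contra ha
  have hsq : 1 ≤ a * a := by have := mul_self_pos.2 ha; omega
  nlinarith [h (a * (|b| + 1)), le_abs_self b, abs_nonneg b]

theorem apply_eq_fst_smul_add_snd_smul {M F : Type*} [AddCommGroup M] [FunLike F (ℤ × ℤ) M]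
    [AddMonoidHomClass F (ℤ × ℤ) M] (φ : F) (p : ℤ × ℤ) :
    φ p = p.1 • φ (1, 0) + p.2 • φ (0, 1) := by
  calc φ p = φ (p.1 • (1, 0) + p.2 • (0, 1)) := by congr 1; ext <;> simp
    _ = p.1 • φ (1, 0) + p.2 • φ (0, 1) := by rw [map_add, map_zsmul, map_zsmul]

section Monotone

variable {F : Type*} [FunLike F (ℤ × ℤ) (ℤ × ℤ)] [AddMonoidHomClass F (ℤ × ℤ) (ℤ × ℤ)] {φ : F}

theorem lexLeZZ_zero_apply (hφ : ∀ u v, lexLeZZ u v → lexLeZZ (φ u) (φ v)) {u : ℤ × ℤ}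
    (hu : lexLeZZ 0 u) : lexLeZZ 0 (φ u) := by
  simpa using hφ 0 u hu

theorem fst_apply_zero_one_eq_zero (hφ : ∀ u v, lexLeZZ u v → lexLeZZ (φ u) (φ v)) :
    (φ (0, 1)).1 = 0 :=
  Int.eq_zero_of_forall_mul_le (b := (φ (1, 0)).1) fun n => by
    have := (hφ (n • (0, 1)) (1, 0) (Or.inl (by simp))).fst_le
    rwa [map_zsmul, Prod.smul_fst, smul_eq_mul] at this

theorem fst_apply_eq_mul (hφ : ∀ u v, lexLeZZ u v → lexLeZZ (φ u) (φ v)) (p : ℤ × ℤ) :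
    (φ p).1 = p.1 * (φ (1, 0)).1 := by
  simp [apply_eq_fst_smul_add_snd_smul φ p, fst_apply_zero_one_eq_zero hφ]

theorem fst_apply_one_zero_eq_one (hφ : ∀ u v, lexLeZZ u v → lexLeZZ (φ u) (φ v))
    (hsurj : Function.Surjective φ) : (φ (1, 0)).1 = 1 := by
  obtain ⟨q, hq⟩ := hsurj (1, 0)
  have hunit : q.1 * (φ (1, 0)).1 = 1 := by simpa [hq] using (fst_apply_eq_mul hφ q).symm
  exact Int.eq_one_of_mul_eq_one_left (lexLeZZ_zero_apply hφ (Or.inl one_pos)).fst_le hunit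

theorem snd_apply_zero_one_eq_one (hφ : ∀ u v, lexLeZZ u v → lexLeZZ (φ u) (φ v))
    (hsurj : Function.Surjective φ) : (φ (0, 1)).2 = 1 := by
  obtain ⟨q, hq⟩ := hsurj (0, 1)
  have hq1 : q.1 = 0 := by
    simpa [hq, fst_apply_one_zero_eq_one hφ hsurj] using (fst_apply_eq_mul hφ q).symm
  have hunit : q.2 * (φ (0, 1)).2 = 1 := by
    simpa [hq, hq1] using (congrArg Prod.snd (apply_eq_fst_smul_add_snd_smul φ q)).symm
  have hpos : lexLeZZ 0 (φ (0, 1)) := lexLeZZ_zero_apply hφ (Or.inr ⟨rfl, zero_le_one⟩)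
  exact Int.eq_one_of_mul_eq_one_left (hpos.snd_le (fst_apply_zero_one_eq_zero hφ).symm) hunit

end Monotone

theorem exists_eq_shearZZ {φ : (ℤ × ℤ) ≃+ (ℤ × ℤ)}
    (hφ : ∀ u v, lexLeZZ u v → lexLeZZ (φ u) (φ v)) : ∃ k, φ = shearZZ k := by
  refine ⟨(φ (1, 0)).2, AddEquiv.ext fun p => ?_⟩
  have ha := fst_apply_one_zero_eq_one hφ φ.surjective
  have hc := fst_apply_zero_one_eq_zero hφ
  have hd := snd_apply_zero_one_eq_one hφ φ.surjective
  rw [apply_eq_fst_smul_add_snd_smul φ p, shearZZ_apply]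
  ext <;> simp only [Prod.fst_add, Prod.snd_add, Prod.smul_fst, Prod.smul_snd, smul_eq_mul,
    ha, hc, hd] <;> ring

/-- The group of order-preserving group automorphisms of `ℤ × ℤ` with the lexicographic
order is isomorphic to `ℤ`: there is an additive family `k ↦ J k` of such automorphisms,
`(x, y) ↦ (x, y + kx)`, and every order-preserving automorphism equals `J k` for a
unique `k ∈ ℤ`. -/
theorem orderAut_lex_int_int_iso_int :
    ∃ J : ℤ → ((ℤ × ℤ) ≃+ (ℤ × ℤ)),
      (∀ (k : ℤ) (p : ℤ × ℤ), J k p = (p.1, p.2 + k * p.1)) ∧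
      (∀ k l : ℤ, J (k + l) = (J k).trans (J l)) ∧
      (∀ k : ℤ, ∀ u v : ℤ × ℤ, lexLeZZ u v ↔ lexLeZZ (J k u) (J k v)) ∧
      (∀ φ : (ℤ × ℤ) ≃+ (ℤ × ℤ), (∀ u v : ℤ × ℤ, lexLeZZ u v ↔ lexLeZZ (φ u) (φ v)) →
        ∃! k : ℤ, φ = J k) := by
  refine ⟨shearZZ, shearZZ_apply, shearZZ_add, fun k u v => (lexLeZZ_shearZZ_iff k u v).symm,
    fun φ hφ => ?_⟩
  obtain ⟨k, rfl⟩ := exists_eq_shearZZ fun u v => (hφ u v).1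
  exact ⟨k, rfl, fun l hl => shearZZ_injective hl.symm⟩
end

section
/- Let Λ₁, Λ₂ be ordered abelian groups and give Λ = Λ₁ × Λ₂ the lexicographic order. Then the group of order-preserving automorphisms of Λ that stabilize the convex subgroup {0} × Λ₂ is isomorphic to the semidirect product (Aut⁺(Λ₁) × Aut⁺(Λ₂)) ⋉ Hom(Λ₁, Λ₂), where (α₁, α₂) acts on h ∈ Hom(Λ₁, Λ₂) by (α₁, α₂)·h = α₂ ∘ h ∘ α₁⁻¹. -/
/-!
An automorphism `φ` of `Λ₁ × Λ₂` that maps `{0} × Λ₂` onto itself restricts to an automorphism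
`α₂` of that subgroup, induces an automorphism `α₁` of the quotient `Λ₁`, and the rest of it is the
homomorphism `h x = (φ (x, 0)).2`; so `φ (x, y) = (α₁ x, α₂ y + h x)`, a skew product. For a skew
product the lexicographic order is preserved exactly when `α₁` and `α₂` preserve order: `h` only
shifts the second coordinates of points with equal first coordinate by the same amount. Composing
two skew products is a direct computation, which is the semidirect-product law.
-/

section

variable {Λ₁ Λ₂ : Type*} [AddCommGroup Λ₁] [LinearOrder Λ₁] [IsOrderedAddMonoid Λ₁]
  [AddCommGroup Λ₂] [LinearOrder Λ₂] [IsOrderedAddMonoid Λ₂]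

/-- The lexicographic order on `Λ₁ × Λ₂`. -/
def lexLeProd (u v : Λ₁ × Λ₂) : Prop := u.1 < v.1 ∨ (u.1 = v.1 ∧ u.2 ≤ v.2)

/-- An automorphism of `Λ₁ × Λ₂` preserves the lexicographic order and stabilizes the
convex subgroup `{0} × Λ₂`. -/
def IsLexAutStab (φ : (Λ₁ × Λ₂) ≃+ (Λ₁ × Λ₂)) : Prop :=
  (∀ u v : Λ₁ × Λ₂, lexLeProd u v ↔ lexLeProd (φ u) (φ v)) ∧
  (∀ v : Λ₁ × Λ₂, v.1 = 0 ↔ (φ v).1 = 0)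

theorem lexLeProd_iff {α β : Type*} [LinearOrder α] [LinearOrder β] {u v : α × β} :
    lexLeProd u v ↔ u.1 ≤ v.1 ∧ (u.1 = v.1 → u.2 ≤ v.2) :=
  Prod.Lex.toLex_le_toLex.symm.trans Prod.Lex.toLex_le_toLex'

theorem IsLexAutStab.trans {α β : Type*} [AddCommGroup α] [LinearOrder α] [AddCommGroup β]
    [LinearOrder β] {φ ψ : (α × β) ≃+ (α × β)} (hφ : IsLexAutStab φ) (hψ : IsLexAutStab ψ) :
    IsLexAutStab (ψ.trans φ) :=
  ⟨fun u v => (hψ.1 u v).trans (hφ.1 (ψ u) (ψ v)), fun v => (hψ.2 v).trans (hφ.2 (ψ v))⟩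

namespace AddEquiv

variable {A B C D E F : Type*} [AddCommGroup A] [AddCommGroup B] [AddCommGroup C]
  [AddCommGroup D] [AddCommGroup E] [AddCommGroup F]

def skewProd (e₁ : A ≃+ C) (e₂ : B ≃+ D) (f : A →+ D) : (A × B) ≃+ (C × D) :=
  (e₁.toIntLinearEquiv.skewProd e₂.toIntLinearEquiv f.toIntLinearMap).toAddEquiv

@[simp]
theorem skewProd_apply (e₁ : A ≃+ C) (e₂ : B ≃+ D) (f : A →+ D) (v : A × B) :
    skewProd e₁ e₂ f v = (e₁ v.1, e₂ v.2 + f v.1) :=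
  rfl

theorem skewProd_inj {e₁ e₁' : A ≃+ C} {e₂ e₂' : B ≃+ D} {f f' : A →+ D} :
    skewProd e₁ e₂ f = skewProd e₁' e₂' f' ↔ e₁ = e₁' ∧ e₂ = e₂' ∧ f = f' := by
  refine ⟨fun h => ?_, by rintro ⟨rfl, rfl, rfl⟩; rfl⟩
  have hinl x := congrArg (· (x, (0 : B))) h
  have hinr y := congrArg (· ((0 : A), y)) h
  simp only [skewProd_apply, map_zero, add_zero, zero_add, Prod.mk.injEq] at hinl hinr
  exact ⟨ext fun x => (hinl x).1, ext fun y => (hinr y).2, AddMonoidHom.ext fun x => (hinl x).2⟩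

theorem skewProd_trans (b₁ : A ≃+ C) (b₂ : B ≃+ D) (k : A →+ D)
    (a₁ : C ≃+ E) (a₂ : D ≃+ F) (h : C →+ F) :
    (skewProd b₁ b₂ k).trans (skewProd a₁ a₂ h) =
      skewProd (b₁.trans a₁) (b₂.trans a₂)
        (h.comp b₁.toAddMonoidHom + a₂.toAddMonoidHom.comp k) := by
  ext v
  · rfl
  · simp only [trans_apply, skewProd_apply, map_add, AddMonoidHom.add_apply,
      AddMonoidHom.coe_comp, coe_toAddMonoidHom, Function.comp_apply]
    abel

theorem fst_apply_eq_fst_apply_inl {φ : (A × B) ≃+ (C × D)} (hφ : ∀ y, (φ (0, y)).1 = 0)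
    (v : A × B) : (φ v).1 = (φ (v.1, 0)).1 := by
  conv_lhs => rw [← Prod.fst_add_snd v]
  rw [map_add, Prod.fst_add, hφ, add_zero]

theorem mk_zero_snd_apply_inr {φ : (A × B) ≃+ (C × D)} (hφ : ∀ y, (φ (0, y)).1 = 0) (y : B) :
    ((0, (φ (0, y)).2) : C × D) = φ (0, y) :=
  Prod.ext (hφ y).symm rfl

theorem exists_eq_skewProd {φ : (A × B) ≃+ (C × D)} (hφ : ∀ v, v.1 = 0 ↔ (φ v).1 = 0) :
    ∃ (e₁ : A ≃+ C) (e₂ : B ≃+ D) (f : A →+ D), φ = skewProd e₁ e₂ f := by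
  have hinr y : (φ (0, y)).1 = 0 := (hφ (0, y)).1 rfl
  have hinr' y : (φ.symm (0, y)).1 = 0 := by simpa using (hφ (φ.symm (0, y))).2
  let e₁ : A ≃+ C := AddMonoidHom.toAddEquiv
    ((AddMonoidHom.fst C D).comp (φ.toAddMonoidHom.comp (AddMonoidHom.inl A B)))
    ((AddMonoidHom.fst A B).comp (φ.symm.toAddMonoidHom.comp (AddMonoidHom.inl C D)))
    (by ext x; simp [← fst_apply_eq_fst_apply_inl hinr'])
    (by ext x; simp [← fst_apply_eq_fst_apply_inl hinr])
  let e₂ : B ≃+ D := AddMonoidHom.toAddEquiv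
    ((AddMonoidHom.snd C D).comp (φ.toAddMonoidHom.comp (AddMonoidHom.inr A B)))
    ((AddMonoidHom.snd A B).comp (φ.symm.toAddMonoidHom.comp (AddMonoidHom.inr C D)))
    (by ext y; simp [mk_zero_snd_apply_inr hinr])
    (by ext y; simp [mk_zero_snd_apply_inr hinr'])
  refine ⟨e₁, e₂, (AddMonoidHom.snd C D).comp (φ.toAddMonoidHom.comp (AddMonoidHom.inl A B)), ?_⟩
  ext v
  · exact fst_apply_eq_fst_apply_inl hinr v
  · change (φ v).2 = (φ (0, v.2)).2 + (φ (v.1, 0)).2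
    rw [add_comm, ← Prod.snd_add, ← map_add, Prod.fst_add_snd]

section Order

variable [LinearOrder A] [LinearOrder B] [LinearOrder C] [LinearOrder D] [IsOrderedAddMonoid D]

theorem lexLeProd_skewProd_iff (e₁ : A ≃+ C) (e₂ : B ≃+ D) (f : A →+ D) :
    (∀ u v, lexLeProd u v ↔ lexLeProd (skewProd e₁ e₂ f u) (skewProd e₁ e₂ f v)) ↔
      (∀ x y, x ≤ y ↔ e₁ x ≤ e₁ y) ∧ (∀ x y, x ≤ y ↔ e₂ x ≤ e₂ y) := by
  constructor
  · intro H
    refine ⟨fun x y => ?_, fun x y => ?_⟩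
    · have h := H (x, 0) (y, 0)
      simp only [lexLeProd_iff, skewProd_apply, map_zero, zero_add, le_refl, implies_true,
        and_true, e₁.injective.eq_iff] at h
      rw [h]
      exact and_iff_left_of_imp fun _ hxy => hxy ▸ le_rfl
    · simpa [lexLeProd_iff] using H (0, x) (0, y)
  · rintro ⟨h₁, h₂⟩ u v
    simp only [lexLeProd_iff, skewProd_apply, ← h₁, e₁.injective.eq_iff]
    refine and_congr_right fun _ => imp_congr_right fun huv => ?_
    rw [huv, add_le_add_iff_right, ← h₂]

end Order

theorem isLexAutStab_skewProd_iff {α β : Type*} [AddCommGroup α] [LinearOrder α]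
    [AddCommGroup β] [LinearOrder β] [IsOrderedAddMonoid β]
    (e₁ : α ≃+ α) (e₂ : β ≃+ β) (f : α →+ β) :
    IsLexAutStab (skewProd e₁ e₂ f) ↔
      (∀ x y, x ≤ y ↔ e₁ x ≤ e₁ y) ∧ (∀ x y, x ≤ y ↔ e₂ x ≤ e₂ y) :=
  (and_iff_left fun v => by simp).trans (lexLeProd_skewProd_iff e₁ e₂ f)

end AddEquiv

/-- The group of order-preserving automorphisms of `Λ₁ × Λ₂` (lexicographic order)
stabilizing `{0} × Λ₂` is isomorphic to `(Aut⁺(Λ₁) × Aut⁺(Λ₂)) ⋉ Hom(Λ₁, Λ₂)`: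
every such automorphism is of the form `(x, y) ↦ (α₁ x, α₂ y + h x)` for a unique triple
`(α₁, α₂, h)` with `α₁, α₂` order-preserving automorphisms and `h` a homomorphism; every
such triple arises; and composition corresponds to the semidirect-product multiplication
`((α₁, α₂), h) · ((β₁, β₂), k) = ((α₁β₁, α₂β₂), h ∘ β₁ + α₂ ∘ k)`
(the `(α₁, α₂)`-action on homomorphisms being `h ↦ α₂ ∘ h ∘ α₁⁻¹`). -/
theorem lexAutStab_iso_semidirect :
    (∀ φ : (Λ₁ × Λ₂) ≃+ (Λ₁ × Λ₂), IsLexAutStab φ →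
      ∃! t : (Λ₁ ≃+ Λ₁) × (Λ₂ ≃+ Λ₂) × (Λ₁ →+ Λ₂),
        (∀ x y : Λ₁, x ≤ y ↔ t.1 x ≤ t.1 y) ∧ (∀ x y : Λ₂, x ≤ y ↔ t.2.1 x ≤ t.2.1 y) ∧
        (∀ v : Λ₁ × Λ₂, φ v = (t.1 v.1, t.2.1 v.2 + t.2.2 v.1))) ∧
    (∀ (a₁ : Λ₁ ≃+ Λ₁) (a₂ : Λ₂ ≃+ Λ₂) (h : Λ₁ →+ Λ₂),
      (∀ x y : Λ₁, x ≤ y ↔ a₁ x ≤ a₁ y) → (∀ x y : Λ₂, x ≤ y ↔ a₂ x ≤ a₂ y) →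
      ∃ φ : (Λ₁ × Λ₂) ≃+ (Λ₁ × Λ₂), IsLexAutStab φ ∧
        ∀ v : Λ₁ × Λ₂, φ v = (a₁ v.1, a₂ v.2 + h v.1)) ∧
    (∀ (φ ψ : (Λ₁ × Λ₂) ≃+ (Λ₁ × Λ₂)), IsLexAutStab φ → IsLexAutStab ψ →
      ∀ (a₁ : Λ₁ ≃+ Λ₁) (a₂ : Λ₂ ≃+ Λ₂) (h : Λ₁ →+ Λ₂)
        (b₁ : Λ₁ ≃+ Λ₁) (b₂ : Λ₂ ≃+ Λ₂) (k : Λ₁ →+ Λ₂),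
        (∀ v : Λ₁ × Λ₂, φ v = (a₁ v.1, a₂ v.2 + h v.1)) →
        (∀ v : Λ₁ × Λ₂, ψ v = (b₁ v.1, b₂ v.2 + k v.1)) →
        IsLexAutStab (ψ.trans φ) ∧
        ∀ v : Λ₁ × Λ₂, (ψ.trans φ) v =
          ((b₁.trans a₁) v.1, (b₂.trans a₂) v.2 +
            (h.comp b₁.toAddMonoidHom + a₂.toAddMonoidHom.comp k) v.1)) := by
  refine ⟨fun φ hφ => ?_, fun a₁ a₂ h ha₁ ha₂ => ⟨AddEquiv.skewProd a₁ a₂ h,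
    (AddEquiv.isLexAutStab_skewProd_iff a₁ a₂ h).2 ⟨ha₁, ha₂⟩, fun _ => rfl⟩, ?_⟩
  · obtain ⟨e₁, e₂, f, rfl⟩ := AddEquiv.exists_eq_skewProd hφ.2
    obtain ⟨he₁, he₂⟩ := (AddEquiv.isLexAutStab_skewProd_iff e₁ e₂ f).1 hφ
    refine ⟨(e₁, e₂, f), ⟨he₁, he₂, fun _ => rfl⟩, ?_⟩
    rintro ⟨b₁, b₂, k⟩ ⟨-, -, hk⟩
    obtain ⟨rfl, rfl, rfl⟩ := AddEquiv.skewProd_inj.1 (AddEquiv.ext hk).symm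
    rfl
  · intro φ ψ hφ hψ a₁ a₂ h b₁ b₂ k hφ_eq hψ_eq
    obtain rfl : φ = AddEquiv.skewProd a₁ a₂ h := AddEquiv.ext hφ_eq
    obtain rfl : ψ = AddEquiv.skewProd b₁ b₂ k := AddEquiv.ext hψ_eq
    exact ⟨hφ.trans hψ, fun v => by rw [AddEquiv.skewProd_trans]; rfl⟩

end
end

section
/- Let α : G → Aut⁺(Λ) be a homomorphism and L : G → Λ an α-affine Lyndon length function. Define δ : G × G → Λ by δ(g,h) = α_g(L(g⁻¹h)). Then δ is a G-invariant pseudometric: δ(g,g) = 0, δ(g,h) = δ(h,g), δ(g,k) ≤ δ(g,h) + δ(h,k), and δ(γg, γh) = α_γ(δ(g,h)) for all γ, g, h, k ∈ G. -/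
/-!
The triangle inequality is the only non-formal part. Applying (L4) to the triple `(a, a, b)`
shows `c(a, b) ≤ c(a, a) = L(a)`, which unfolds to `L(b) ≤ L(a) + α_a L(a⁻¹b)`; for
`a = g⁻¹h`, `b = g⁻¹k` and after applying the order-preserving `α_g`, this is
`δ(g, k) ≤ δ(g, h) + δ(h, k)`. Symmetry is (L3) transported by `α_g`, and invariance is
`α_{γg} = α_γ ∘ α_g`.
-/

/-- Twice the ancillary function `c` of an affine Lyndon length function:
`c2 g h = 2·c(g,h) = L(g) + L(h) − α_g L(g⁻¹h)`. -/
def lyndonC2 {G : Type*} [Group G] {Λ : Type*} [AddCommGroup Λ] [LinearOrder Λ]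
    [IsOrderedAddMonoid Λ]
    (α : G →* Multiplicative (AddAut Λ)) (L : G → Λ) (g h : G) : Λ :=
  L g + L h - Multiplicative.toAdd (α g) (L (g⁻¹ * h))

section AffineLyndon

variable {G : Type*} [Group G] {Λ : Type*}

theorem toAdd_map_mul_apply [AddCommGroup Λ] (α : G →* Multiplicative (AddAut Λ)) (a b : G)
    (x : Λ) :
    Multiplicative.toAdd (α (a * b)) x =
      Multiplicative.toAdd (α a) (Multiplicative.toAdd (α b) x) := by
  rw [map_mul]; rfl

variable [AddCommGroup Λ] (α : G →* Multiplicative (AddAut Λ)) (L : G → Λ)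

def lyndonDelta (g h : G) : Λ := Multiplicative.toAdd (α g) (L (g⁻¹ * h))

theorem lyndonDelta_self (hL2 : L 1 = 0) (g : G) : lyndonDelta α L g g = 0 := by
  rw [lyndonDelta, inv_mul_cancel, hL2, map_zero]

theorem lyndonDelta_comm (hL3 : ∀ g : G, L g = Multiplicative.toAdd (α g) (L g⁻¹)) (g h : G) :
    lyndonDelta α L g h = lyndonDelta α L h g := by
  rw [lyndonDelta, lyndonDelta, hL3, ← toAdd_map_mul_apply, mul_inv_cancel_left, mul_inv_rev,
    inv_inv]

theorem lyndonDelta_mul_mul (γ g h : G) :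
    lyndonDelta α L (γ * g) (γ * h) = Multiplicative.toAdd (α γ) (lyndonDelta α L g h) := by
  rw [lyndonDelta, lyndonDelta, toAdd_map_mul_apply, mul_inv_rev, mul_assoc,
    inv_mul_cancel_left]

variable [LinearOrder Λ] [IsOrderedAddMonoid Λ]

theorem lyndonC2_self (hL2 : L 1 = 0) (g : G) : lyndonC2 α L g g = L g + L g := by
  simp [lyndonC2, hL2]

theorem lyndonC2_le_lyndonC2_self
    (hL4 : ∀ g h k : G, lyndonC2 α L g h < lyndonC2 α L g k →
      lyndonC2 α L g h = lyndonC2 α L h k)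
    (g k : G) : lyndonC2 α L g k ≤ lyndonC2 α L g g :=
  not_lt.mp fun hlt => hlt.ne (hL4 g g k hlt)

theorem le_add_toAdd_apply (hL2 : L 1 = 0)
    (hL4 : ∀ g h k : G, lyndonC2 α L g h < lyndonC2 α L g k →
      lyndonC2 α L g h = lyndonC2 α L h k)
    (a b : G) : L b ≤ L a + Multiplicative.toAdd (α a) (L (a⁻¹ * b)) := by
  have hc := lyndonC2_le_lyndonC2_self α L hL4 a b
  rw [lyndonC2_self α L hL2, lyndonC2, add_sub_assoc, add_le_add_iff_left] at hc
  exact sub_le_iff_le_add.mp hc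

theorem lyndonDelta_triangle (hα : ∀ g : G, Monotone ⇑(Multiplicative.toAdd (α g)))
    (hL2 : L 1 = 0)
    (hL4 : ∀ g h k : G, lyndonC2 α L g h < lyndonC2 α L g k →
      lyndonC2 α L g h = lyndonC2 α L h k)
    (g h k : G) : lyndonDelta α L g k ≤ lyndonDelta α L g h + lyndonDelta α L h k := by
  have hgk := hα g (le_add_toAdd_apply α L hL2 hL4 (g⁻¹ * h) (g⁻¹ * k))
  rwa [map_add, ← toAdd_map_mul_apply, mul_inv_cancel_left, mul_inv_rev, inv_inv,
    mul_assoc, mul_inv_cancel_left] at hgk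

end AffineLyndon

/-- If `L` is an `α`-affine Lyndon length function, then `δ(g,h) = α_g L(g⁻¹h)` is a
pseudometric on `G` which is `G`-invariant up to the dilation `α`:
`δ(g,g) = 0`, `δ(g,h) = δ(h,g)`, `δ(g,k) ≤ δ(g,h) + δ(h,k)`, and
`δ(γg, γh) = α_γ δ(g,h)`. -/
theorem affine_lyndon_length_delta_pseudometric {G : Type*} [Group G] {Λ : Type*}
    [AddCommGroup Λ] [LinearOrder Λ] [IsOrderedAddMonoid Λ] (α : G →* Multiplicative (AddAut Λ))
    (hα : ∀ (g : G) (a b : Λ), a ≤ b ↔ Multiplicative.toAdd (α g) a ≤ Multiplicative.toAdd (α g) b) (L : G → Λ)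
    (hL2 : L 1 = 0)
    (hL3 : ∀ g : G, L g = Multiplicative.toAdd (α g) (L g⁻¹))
    (hL4 : ∀ g h k : G, lyndonC2 α L g h < lyndonC2 α L g k →
      lyndonC2 α L g h = lyndonC2 α L h k)
    (δ : G → G → Λ) (hδ : ∀ g h : G, δ g h = Multiplicative.toAdd (α g) (L (g⁻¹ * h))) :
    (∀ g : G, δ g g = 0) ∧
    (∀ g h : G, δ g h = δ h g) ∧
    (∀ g h k : G, δ g k ≤ δ g h + δ h k) ∧
    (∀ γ g h : G, δ (γ * g) (γ * h) = Multiplicative.toAdd (α γ) (δ g h)) := by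
  obtain rfl : δ = lyndonDelta α L := funext₂ hδ
  exact ⟨lyndonDelta_self α L hL2, lyndonDelta_comm α L hL3,
    lyndonDelta_triangle α L (fun g _ _ => (hα g _ _).mp) hL2 hL4, lyndonDelta_mul_mul α L⟩
end

section
/- Define bijections σ, τ of ℤ³ by σ(x,y,z) = (x, y+1, z) and τ(x,y,z) = (x+1, y, z+y). Then the action of the group ⟨σ, τ⟩ on ℤ³ is free: the only element of ⟨σ, τ⟩ fixing some point of ℤ³ is the identity. -/
/-- The bijection `σ(x,y,z) = (x, y+1, z)` of `ℤ³`. -/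
def heisSigma : Equiv.Perm (ℤ × ℤ × ℤ) where
  toFun p := (p.1, p.2.1 + 1, p.2.2)
  invFun p := (p.1, p.2.1 - 1, p.2.2)
  left_inv p := by obtain ⟨x, y, z⟩ := p; simp
  right_inv p := by obtain ⟨x, y, z⟩ := p; simp

/-- The bijection `τ(x,y,z) = (x+1, y, z+y)` of `ℤ³`. -/
def heisTau : Equiv.Perm (ℤ × ℤ × ℤ) where
  toFun p := (p.1 + 1, p.2.1, p.2.2 + p.2.1)
  invFun p := (p.1 - 1, p.2.1, p.2.2 - p.2.1)
  left_inv p := by obtain ⟨x, y, z⟩ := p; simp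
  right_inv p := by obtain ⟨x, y, z⟩ := p; simp

/-!
Every element of `⟨σ, τ⟩` acts as `(x, y, z) ↦ (x + a, y + b, z + a y + c)` for some integers
`a, b, c`: these maps contain `σ` and `τ` and are closed under composition and inversion.
A fixed point of such a map forces `a = b = 0` from the first two coordinates, and then `c = 0`
from the third.
-/

def heisAffine (a b c : ℤ) (p : ℤ × ℤ × ℤ) : ℤ × ℤ × ℤ :=
  (p.1 + a, p.2.1 + b, p.2.2 + a * p.2.1 + c)

theorem heisAffine_zero : heisAffine 0 0 0 = id := by
  funext p
  simp [heisAffine]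

theorem heisAffine_comp (a b c a' b' c' : ℤ) :
    heisAffine a b c ∘ heisAffine a' b' c' = heisAffine (a + a') (b + b') (c + c' + a * b') := by
  funext p
  simp only [Function.comp_apply, heisAffine, Prod.mk.injEq]
  refine ⟨?_, ?_, ?_⟩ <;> ring

theorem eq_zero_of_heisAffine_apply_eq {a b c : ℤ} {p : ℤ × ℤ × ℤ} (h : heisAffine a b c p = p) :
    a = 0 ∧ b = 0 ∧ c = 0 := by
  obtain ⟨x, y, z⟩ := p
  simp only [heisAffine, Prod.mk.injEq] at h
  obtain ⟨hx, hy, hz⟩ := h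
  have ha : a = 0 := by omega
  subst ha
  omega

def heisAffineSubgroup : Subgroup (Equiv.Perm (ℤ × ℤ × ℤ)) where
  carrier := {g | ∃ a b c, ⇑g = heisAffine a b c}
  one_mem' := ⟨0, 0, 0, heisAffine_zero.symm⟩
  mul_mem' := by
    rintro g h ⟨a, b, c, hg⟩ ⟨a', b', c', hh⟩
    exact ⟨_, _, _, by rw [Equiv.Perm.coe_mul, hg, hh, heisAffine_comp]⟩
  inv_mem' := by
    rintro g ⟨a, b, c, hg⟩
    refine ⟨-a, -b, a * b - c, funext fun p => g.injective ?_⟩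
    have hid : heisAffine a b c ∘ heisAffine (-a) (-b) (a * b - c) = id := by
      rw [heisAffine_comp, ← heisAffine_zero]
      congr 1 <;> ring
    rw [← Equiv.Perm.mul_apply, mul_inv_cancel, Equiv.Perm.one_apply, hg, ← Function.comp_apply
      (f := heisAffine a b c), hid, id]

theorem closure_sigma_tau_le_heisAffineSubgroup :
    Subgroup.closure {heisSigma, heisTau} ≤ heisAffineSubgroup := by
  rw [Subgroup.closure_le]
  rintro g (rfl | rfl)
  · exact ⟨0, 1, 0, funext fun p => by simp [heisSigma, heisAffine]⟩
  · exact ⟨1, 0, 0, funext fun p => by simp [heisTau, heisAffine, add_comm]⟩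

/-- The action of `⟨σ, τ⟩` on `ℤ³` is free: the only element of the subgroup of
`Perm ℤ³` generated by `σ` and `τ` fixing some point is the identity. -/
theorem heisenberg_perm_action_free :
    ∀ g ∈ Subgroup.closure ({heisSigma, heisTau} : Set (Equiv.Perm (ℤ × ℤ × ℤ))),
      (∃ p : ℤ × ℤ × ℤ, g p = p) → g = 1 := by
  rintro g hg ⟨p, hp⟩
  obtain ⟨a, b, c, hg⟩ := closure_sigma_tau_le_heisAffineSubgroup hg
  rw [hg] at hp
  obtain ⟨rfl, rfl, rfl⟩ := eq_zero_of_heisAffine_apply_eq hp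
  exact DFunLike.coe_injective (hg.trans heisAffine_zero)
end

section
/- Let a > 0 be a transcendental real number and define bijections σ, τ of ℤ × ℝ by σ(x,y) = (x+1, ay) and τ(x,y) = (x, y+1). Then the subgroup of permutations of ℤ × ℝ generated by σ and τ is isomorphic to the wreath product ℤ ≀ ℤ (the restricted wreath product of two infinite cyclic groups), and its action on ℤ × ℝ is free. -/
/-- The shift action of `ℤ` on `⨁_{n ∈ ℤ} ℤ` (modelled as `ℤ →₀ ℤ`), defining the
restricted wreath product `ℤ ≀ ℤ`. -/
noncomputable def wreathShift : Multiplicative ℤ →* MulAut (Multiplicative (ℤ →₀ ℤ)) :=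
  MonoidHom.mk'
    (fun k => AddEquiv.toMultiplicative (Finsupp.domCongr (Equiv.addRight k.toAdd)))
    (by
      intro a b
      have h : (Finsupp.domCongr (M := ℤ) (Equiv.addRight (Multiplicative.toAdd (a * b)))) =
          (Finsupp.domCongr (Equiv.addRight (Multiplicative.toAdd b))).trans
            (Finsupp.domCongr (Equiv.addRight (Multiplicative.toAdd a))) := by
        rw [Finsupp.domCongr_trans]
        congr 1
        ext z
        simp [toAdd_mul]
        ring
      ext x
      simp only [h]
      rfl)

/-- The restricted wreath product `ℤ ≀ ℤ = (⨁_{n∈ℤ} ℤ) ⋊ ℤ`, with `ℤ` acting by shifting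
coordinates. -/
noncomputable def WreathZZ := Multiplicative (ℤ →₀ ℤ) ⋊[wreathShift] Multiplicative ℤ

noncomputable instance : Group WreathZZ := SemidirectProduct.instGroup

/-!
The element `(f, k)` of `ℤ ≀ ℤ` acts on `ℤ × ℝ` by
`(x, y) ↦ (x + k, a ^ k * y + ∑ₙ f n * a ^ n)`. This action sends the two standard generators
to `σ` and `τ`, so its image is `⟨σ, τ⟩`. If `(f, k)` fixes a point then `k = 0` and the Laurent
polynomial `f` vanishes at `a`; multiplying by a power of `T` turns it into an integer polynomial
vanishing at the transcendental `a`, so `f = 0`. Thus the action is free, and in particular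
faithful.
-/

open LaurentPolynomial

theorem LaurentPolynomial.eval₂_injective_of_transcendental {R A : Type*} [CommRing R]
    [CommRing A] [Algebra R A] {x : Aˣ} (hx : Transcendental R (x : A)) :
    Function.Injective (eval₂ (algebraMap R A) x) := by
  rw [injective_iff_map_eq_zero]
  intro p hp
  obtain ⟨n, q, hq⟩ := exists_T_pow p
  have hq0 : Polynomial.aeval (x : A) q = 0 := by
    rw [Polynomial.aeval_def, ← eval₂_toLaurent, hq, map_mul, hp, zero_mul]
  rw [(transcendental_iff_injective.mp hx).eq_iff' (map_zero _)] at hq0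
  rwa [hq0, map_zero, eq_comm, (isUnit_T n).mul_left_eq_zero] at hq

section LaurentEval

variable {K : Type*} [Field K] {a : K}

noncomputable def laurentEval (a : K) (f : ℤ →₀ ℤ) : K := f.sum fun n c => c * a ^ n

theorem laurentEval_add (f g : ℤ →₀ ℤ) :
    laurentEval a (f + g) = laurentEval a f + laurentEval a g :=
  Finsupp.sum_add_index' (by simp) (by intros; push_cast; ring)

theorem laurentEval_single (n c : ℤ) : laurentEval a (Finsupp.single n c) = c * a ^ n := by
  simp [laurentEval]

theorem laurentEval_equivMapDomain_addRight (ha : a ≠ 0) (k : ℤ) (f : ℤ →₀ ℤ) :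
    laurentEval a (f.equivMapDomain (Equiv.addRight k)) = a ^ k * laurentEval a f := by
  simp only [laurentEval, Finsupp.sum_equivMapDomain, Finsupp.mul_sum, Equiv.coe_addRight,
    zpow_add₀ ha]
  exact Finsupp.sum_congr fun _ _ => by ring

theorem eval₂_ofCoeff (ha : a ≠ 0) (f : ℤ →₀ ℤ) :
    eval₂ (algebraMap ℤ K) (Units.mk0 a ha) (AddMonoidAlgebra.ofCoeff f) = laurentEval a f := by
  induction f using Finsupp.induction_linear with
  | zero => simp [laurentEval]
  | add f g hf hg => rw [AddMonoidAlgebra.ofCoeff_add, map_add, hf, hg, laurentEval_add]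
  | single n c => simp [laurentEval_single, single_eq_C_mul_T]

theorem laurentEval_eq_zero (ha : a ≠ 0) (ht : Transcendental ℤ a) {f : ℤ →₀ ℤ}
    (hf : laurentEval a f = 0) : f = 0 := by
  rw [← eval₂_ofCoeff ha, ← map_zero (eval₂ (algebraMap ℤ K) (Units.mk0 a ha)),
    (eval₂_injective_of_transcendental ht).eq_iff] at hf
  exact congrArg AddMonoidAlgebra.coeff hf

end LaurentEval

namespace WreathZZ

noncomputable def base : Multiplicative (ℤ →₀ ℤ) →* WreathZZ := SemidirectProduct.inl

noncomputable def shift : Multiplicative ℤ →* WreathZZ := SemidirectProduct.inr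

theorem shift_mul_base_mul_shift_inv (k : ℤ) (f : ℤ →₀ ℤ) :
    shift (.ofAdd k) * base (.ofAdd f) * (shift (.ofAdd k))⁻¹ =
      base (.ofAdd (f.equivMapDomain (Equiv.addRight k))) :=
  (SemidirectProduct.inl_aut (φ := wreathShift) (.ofAdd k) (.ofAdd f)).symm

theorem base_mul_shift (w : WreathZZ) : base w.left * shift w.right = w :=
  SemidirectProduct.inl_left_mul_inr_right w

theorem closure_shift_base_eq_top :
    Subgroup.closure {shift (.ofAdd 1), base (.ofAdd (Finsupp.single 0 1))} = ⊤ := by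
  set H := Subgroup.closure {shift (.ofAdd 1), base (.ofAdd (Finsupp.single 0 1))}
  have shift_mem (k : Multiplicative ℤ) : shift k ∈ H := by
    rw [← ofAdd_toAdd k, ← mul_one k.toAdd, ← smul_eq_mul, ofAdd_zsmul, map_zpow]
    exact zpow_mem (Subgroup.subset_closure (by simp)) _
  have single_mem (n c : ℤ) : base (.ofAdd (Finsupp.single n c)) ∈ H := by
    have hs : base (.ofAdd (Finsupp.single 0 c)) ∈ H := by
      rw [← mul_one c, ← smul_eq_mul, ← Finsupp.smul_single, ofAdd_zsmul, map_zpow]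
      exact zpow_mem (Subgroup.subset_closure (by simp)) c
    have := shift_mul_base_mul_shift_inv n (Finsupp.single 0 c)
    simp only [Finsupp.equivMapDomain_single, Equiv.coe_addRight, zero_add] at this
    exact this ▸ mul_mem (mul_mem (shift_mem _) hs) (inv_mem (shift_mem _))
  have base_mem (f : Multiplicative (ℤ →₀ ℤ)) : base f ∈ H := by
    induction f using Finsupp.induction_linear with
    | zero => exact (map_one base).symm ▸ one_mem H
    | add f g hf hg => exact (map_mul base _ _).symm ▸ mul_mem hf hg
    | single n c => exact single_mem n c
  exact eq_top_iff.2 fun w _ => base_mul_shift w ▸ mul_mem (base_mem _) (shift_mem _)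

end WreathZZ

section AffineAction

variable {K : Type*} [Field K] {a : K}

def affinePerm (ha : a ≠ 0) (k : ℤ) (b : K) : Equiv.Perm (ℤ × K) :=
  (Equiv.addRight k).prodCongr
    ((Equiv.mulLeft₀ (a ^ k) (zpow_ne_zero k ha)).trans (Equiv.addRight b))

@[simp]
theorem affinePerm_apply (ha : a ≠ 0) (k : ℤ) (b : K) (p : ℤ × K) :
    affinePerm ha k b p = (p.1 + k, a ^ k * p.2 + b) :=
  rfl

theorem affinePerm_mul (ha : a ≠ 0) (k l : ℤ) (b c : K) :
    affinePerm ha k b * affinePerm ha l c = affinePerm ha (k + l) (b + a ^ k * c) := by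
  ext p <;> simp [zpow_add₀ ha] <;> ring

noncomputable def wreathPerm (ha : a ≠ 0) : WreathZZ →* Equiv.Perm (ℤ × K) :=
  MonoidHom.mk' (fun w => affinePerm ha w.right.toAdd (laurentEval a w.left.toAdd)) fun v w => by
    rw [affinePerm_mul, ← laurentEval_equivMapDomain_addRight ha, ← laurentEval_add]
    -- `(v * w).left` is `v.left` plus `w.left` shifted by `v.right`, definitionally
    rfl

theorem wreathPerm_apply (ha : a ≠ 0) (w : WreathZZ) (p : ℤ × K) :
    wreathPerm ha w p =
      (p.1 + w.right.toAdd, a ^ w.right.toAdd * p.2 + laurentEval a w.left.toAdd) :=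
  rfl

theorem eq_one_of_wreathPerm_apply_eq_self (ha : a ≠ 0) (ht : Transcendental ℤ a) {w : WreathZZ}
    {p : ℤ × K} (h : wreathPerm ha w p = p) : w = 1 := by
  simp only [wreathPerm_apply, Prod.ext_iff, add_eq_left] at h
  obtain ⟨hk, hb⟩ := h
  rw [hk, zpow_zero, one_mul, add_eq_left] at hb
  exact SemidirectProduct.ext (laurentEval_eq_zero ha ht hb) hk

theorem wreathPerm_injective (ha : a ≠ 0) (ht : Transcendental ℤ a) :
    Function.Injective (wreathPerm (K := K) ha) :=
  (injective_iff_map_eq_one _).2 fun _ hw =>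
    eq_one_of_wreathPerm_apply_eq_self ha ht (p := 0) (by rw [hw]; rfl)

theorem wreathPerm_shift (ha : a ≠ 0) (k : ℤ) :
    wreathPerm ha (WreathZZ.shift (.ofAdd k)) = affinePerm ha k 0 :=
  congrArg (affinePerm ha k) Finsupp.sum_zero_index

theorem wreathPerm_base (ha : a ≠ 0) (f : ℤ →₀ ℤ) :
    wreathPerm ha (WreathZZ.base (.ofAdd f)) = affinePerm ha 0 (laurentEval a f) :=
  rfl

theorem range_wreathPerm (ha : a ≠ 0) :
    (wreathPerm ha).range = Subgroup.closure {affinePerm ha 1 0, affinePerm ha 0 1} := by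
  rw [MonoidHom.range_eq_map, ← WreathZZ.closure_shift_base_eq_top, MonoidHom.map_closure,
    Set.image_pair]
  rw [wreathPerm_shift, wreathPerm_base, laurentEval_single, Int.cast_one, one_mul, zpow_zero]

end AffineAction

/-- For transcendental `a > 0`, the subgroup of `Perm (ℤ × ℝ)` generated by
`σ(x,y) = (x+1, ay)` and `τ(x,y) = (x, y+1)` is isomorphic to the restricted wreath
product `ℤ ≀ ℤ`, and its action on `ℤ × ℝ` is free. -/
theorem wreath_product_perm_iso_and_free (a : ℝ) (ha0 : 0 < a)
    (ha : Transcendental ℚ a) (σ τ : Equiv.Perm (ℤ × ℝ))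
    (hσ : ∀ p : ℤ × ℝ, σ p = (p.1 + 1, a * p.2))
    (hτ : ∀ p : ℤ × ℝ, τ p = (p.1, p.2 + 1)) :
    Nonempty (WreathZZ ≃* (Subgroup.closure {σ, τ} : Subgroup (Equiv.Perm (ℤ × ℝ)))) ∧
    ∀ g ∈ Subgroup.closure ({σ, τ} : Set (Equiv.Perm (ℤ × ℝ))),
      (∃ p : ℤ × ℝ, g p = p) → g = 1 := by
  have ht : Transcendental ℤ a := ha.restrictScalars (algebraMap ℤ ℚ).injective_int
  have hrange : (wreathPerm ha0.ne').range = Subgroup.closure {σ, τ} := by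
    rw [range_wreathPerm]
    congr 3 <;> ext p <;> simp [hσ, hτ]
  refine ⟨⟨(MonoidHom.ofInjective (wreathPerm_injective ha0.ne' ht)).trans
    (MulEquiv.subgroupCongr hrange)⟩, ?_⟩
  rintro g hg ⟨p, hp⟩
  obtain ⟨w, rfl⟩ := hrange ▸ hg
  rw [eq_one_of_wreathPerm_apply_eq_self ha0.ne' ht hp, map_one]
end

section
/- Let a ≥ 2 be an integer and define bijections σ, τ of ℤ × ℝ by σ(x,y) = (x+1, ay) and τ(x,y) = (x, y+1). Then the subgroup of permutations of ℤ × ℝ generated by σ and τ is isomorphic to the Baumslag–Solitar group BS(1,a) = ⟨s, t | s t s⁻¹ = t^a⟩ via s ↦ σ, t ↦ τ, and the action of this group on ℤ × ℝ is free. -/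
/-- The single relation `s t s⁻¹ (t^a)⁻¹` defining the Baumslag–Solitar group
`BS(1,a) = ⟨s, t | s t s⁻¹ = t^a⟩`, with `s = of true`, `t = of false`. -/
def bsRels (a : ℤ) : Set (FreeGroup Bool) :=
  {FreeGroup.of true * FreeGroup.of false * (FreeGroup.of true)⁻¹ *
    ((FreeGroup.of false) ^ a)⁻¹}

/-! Every element of `BS(1,a)` is a word `s⁻ᵖ tᵠ sʳ` with `p r : ℕ`, since `s tᵠ s⁻¹ = t^(aq)`
lets a letter `s` on the left be absorbed into `s⁻ᵖ` or pushed through `tᵠ`. Such a word acts on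
`ℤ × ℝ` by `(x, y) ↦ (x + r - p, a⁻ᵖ (aʳ y + q))`, so it fixes a point only if `p = r` and `q = 0`,
that is, only if it is trivial. This gives both the freeness of the action and the injectivity of
`s ↦ σ, t ↦ τ`. -/

open Equiv

section NormalForm

variable {G : Type*} [Group G] {s t : G} {a : ℤ}

theorem mul_zpow_mul_inv_of_conj_eq (h : s * t * s⁻¹ = t ^ a) (q : ℤ) :
    s * t ^ q * s⁻¹ = t ^ (a * q) := by
  rw [← conj_zpow, h, ← zpow_mul]

theorem pow_mul_zpow_mul_inv_pow_of_conj_eq (h : s * t * s⁻¹ = t ^ a) (k : ℕ) (q : ℤ) :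
    s ^ k * t ^ q * (s ^ k)⁻¹ = t ^ (a ^ k * q) := by
  induction k generalizing q with
  | zero => simp
  | succ k ih =>
    calc s ^ (k + 1) * t ^ q * (s ^ (k + 1))⁻¹ = s ^ k * (s * t ^ q * s⁻¹) * (s ^ k)⁻¹ := by
          group
      _ = t ^ (a ^ (k + 1) * q) := by rw [mul_zpow_mul_inv_of_conj_eq h, ih, pow_succ, mul_assoc]

theorem exists_eq_inv_pow_mul_zpow_mul_pow (h : s * t * s⁻¹ = t ^ a) {g : G}
    (hg : g ∈ Subgroup.closure {s, t}) :
    ∃ p r : ℕ, ∃ q : ℤ, g = (s ^ p)⁻¹ * t ^ q * s ^ r := by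
  induction hg using Subgroup.closure_induction_left with
  | one => exact ⟨0, 0, 0, by simp⟩
  | mul_left x hx y _ ih =>
    obtain ⟨p, r, q, rfl⟩ := ih
    rcases hx with rfl | rfl
    · cases p with
      | zero =>
        refine ⟨0, r + 1, a * q, ?_⟩
        rw [← mul_zpow_mul_inv_of_conj_eq h]
        group
      | succ p => exact ⟨p, r, q, by group⟩
    · refine ⟨p, r, a ^ p + q, ?_⟩
      rw [zpow_add, ← mul_one (a ^ p), ← pow_mul_zpow_mul_inv_pow_of_conj_eq h]
      group
  | inv_mul_cancel x hx y _ ih =>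
    obtain ⟨p, r, q, rfl⟩ := ih
    rcases hx with rfl | rfl
    · exact ⟨p + 1, r, q, by group⟩
    · refine ⟨p, r, -a ^ p + q, ?_⟩
      rw [zpow_add, zpow_neg, ← mul_one (a ^ p), ← pow_mul_zpow_mul_inv_pow_of_conj_eq h]
      group

end NormalForm

section AffinePerm

variable {c : ℝ} {σ τ : Perm (ℤ × ℝ)}

theorem pow_apply_of_apply_eq (hσ : ∀ x : ℤ × ℝ, σ x = (x.1 + 1, c * x.2)) (n : ℕ)
    (x : ℤ × ℝ) : (σ ^ n) x = (x.1 + n, c ^ n * x.2) := by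
  induction n with
  | zero => simp
  | succ n ih =>
    rw [pow_succ', Perm.mul_apply, ih, hσ, Prod.mk.injEq]
    push_cast
    exact ⟨by ring, by ring⟩

theorem zpow_apply_of_apply_eq (hτ : ∀ x : ℤ × ℝ, τ x = (x.1, x.2 + 1)) (q : ℤ)
    (x : ℤ × ℝ) : (τ ^ q) x = (x.1, x.2 + q) := by
  induction q using Int.induction_on generalizing x with
  | zero => simp
  | succ q ih =>
    rw [zpow_add_one, Perm.mul_apply, hτ, ih, Prod.mk.injEq]
    push_cast
    exact ⟨rfl, by ring⟩
  | pred q ih =>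
    have hinv : τ⁻¹ x = (x.1, x.2 - 1) := Perm.inv_eq_iff_eq.mpr (by simp [hτ])
    rw [zpow_sub_one, Perm.mul_apply, hinv, ih, Prod.mk.injEq]
    push_cast
    exact ⟨rfl, by ring⟩

theorem conj_eq_zpow_of_apply_eq {a : ℤ} (hσ : ∀ x : ℤ × ℝ, σ x = (x.1 + 1, (a : ℝ) * x.2))
    (hτ : ∀ x : ℤ × ℝ, τ x = (x.1, x.2 + 1)) : σ * τ * σ⁻¹ = τ ^ a := by
  rw [mul_inv_eq_iff_eq_mul]
  ext x : 1
  rw [Perm.mul_apply, Perm.mul_apply, hσ, hτ, hσ, zpow_apply_of_apply_eq hτ, Prod.mk.injEq]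
  exact ⟨rfl, by ring⟩

theorem eq_and_eq_zero_of_apply_eq (hσ : ∀ x : ℤ × ℝ, σ x = (x.1 + 1, c * x.2))
    (hτ : ∀ x : ℤ × ℝ, τ x = (x.1, x.2 + 1)) {p r : ℕ} {q : ℤ} {x : ℤ × ℝ}
    (hx : ((σ ^ p)⁻¹ * τ ^ q * σ ^ r) x = x) : p = r ∧ q = 0 := by
  rw [Perm.mul_apply, Perm.mul_apply, Perm.inv_eq_iff_eq, zpow_apply_of_apply_eq hτ,
    pow_apply_of_apply_eq hσ, pow_apply_of_apply_eq hσ, Prod.mk.injEq] at hx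
  obtain ⟨h₁, h₂⟩ := hx
  have hpr : p = r := by omega
  subst hpr
  exact ⟨rfl, by exact_mod_cast add_eq_left.mp h₂⟩

theorem eq_one_of_mem_closure_of_apply_eq {a : ℤ}
    (hσ : ∀ x : ℤ × ℝ, σ x = (x.1 + 1, (a : ℝ) * x.2)) (hτ : ∀ x : ℤ × ℝ, τ x = (x.1, x.2 + 1))
    {g : Perm (ℤ × ℝ)} (hg : g ∈ Subgroup.closure {σ, τ}) {x : ℤ × ℝ} (hx : g x = x) :
    g = 1 := by
  obtain ⟨p, r, q, rfl⟩ :=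
    exists_eq_inv_pow_mul_zpow_mul_pow (conj_eq_zpow_of_apply_eq hσ hτ) hg
  obtain ⟨rfl, rfl⟩ := eq_and_eq_zero_of_apply_eq hσ hτ hx
  group

end AffinePerm

theorem bsRels_conj_eq_zpow (a : ℤ) :
    (PresentedGroup.of true * PresentedGroup.of false * (PresentedGroup.of true)⁻¹ :
      PresentedGroup (bsRels a)) = PresentedGroup.of false ^ a := by
  rw [← mul_inv_eq_one]
  exact PresentedGroup.one_of_mem rfl

theorem bsRels_closure_of_eq_top (a : ℤ) :
    Subgroup.closure {PresentedGroup.of true, PresentedGroup.of false} =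
      (⊤ : Subgroup (PresentedGroup (bsRels a))) :=
  eq_top_iff.mpr fun w _ =>
    PresentedGroup.generated_by _ _ (fun b => Subgroup.subset_closure (by cases b <;> simp)) w

/-- For an integer `a ≥ 2`, the subgroup of `Perm (ℤ × ℝ)` generated by
`σ(x,y) = (x+1, ay)` and `τ(x,y) = (x, y+1)` is isomorphic to the soluble
Baumslag–Solitar group `BS(1,a) = ⟨s, t | s t s⁻¹ = t^a⟩` via `s ↦ σ`, `t ↦ τ`, and its
action on `ℤ × ℝ` is free. -/
theorem baumslag_solitar_perm_iso_and_free (a : ℤ)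
    (σ τ : Equiv.Perm (ℤ × ℝ))
    (hσ : ∀ p : ℤ × ℝ, σ p = (p.1 + 1, (a : ℝ) * p.2))
    (hτ : ∀ p : ℤ × ℝ, τ p = (p.1, p.2 + 1)) :
    (∃ e : PresentedGroup (bsRels a) ≃*
        (Subgroup.closure {σ, τ} : Subgroup (Equiv.Perm (ℤ × ℝ))),
      e (PresentedGroup.of true) = ⟨σ, Subgroup.subset_closure (by simp)⟩ ∧
      e (PresentedGroup.of false) = ⟨τ, Subgroup.subset_closure (by simp)⟩) ∧
    ∀ g ∈ Subgroup.closure ({σ, τ} : Set (Equiv.Perm (ℤ × ℝ))),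
      (∃ p : ℤ × ℝ, g p = p) → g = 1 := by
  let φ : PresentedGroup (bsRels a) →* Perm (ℤ × ℝ) :=
    PresentedGroup.toGroup (f := fun b => if b then σ else τ) (by
      rintro r rfl
      simpa [mul_inv_eq_one] using conj_eq_zpow_of_apply_eq hσ hτ)
  have hφs : φ (PresentedGroup.of true) = σ := PresentedGroup.toGroup.of _
  have hφt : φ (PresentedGroup.of false) = τ := PresentedGroup.toGroup.of _
  have hrange : φ.range = Subgroup.closure {σ, τ} := by
    rw [MonoidHom.range_eq_map, ← bsRels_closure_of_eq_top, MonoidHom.map_closure,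
      Set.image_pair, hφs, hφt]
  have hinj : Function.Injective φ := by
    refine (injective_iff_map_eq_one φ).mpr fun w hw => ?_
    obtain ⟨p, r, q, rfl⟩ := exists_eq_inv_pow_mul_zpow_mul_pow (bsRels_conj_eq_zpow a)
      (bsRels_closure_of_eq_top a ▸ Subgroup.mem_top w)
    simp only [map_mul, map_inv, map_pow, map_zpow, hφs, hφt] at hw
    obtain ⟨rfl, rfl⟩ := eq_and_eq_zero_of_apply_eq hσ hτ (x := 0) (by rw [hw]; rfl)
    group
  exact ⟨⟨(MonoidHom.ofInjective hinj).trans (MulEquiv.subgroupCongr hrange),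
    Subtype.ext hφs, Subtype.ext hφt⟩,
    fun g hg ⟨_, hx⟩ => eq_one_of_mem_closure_of_apply_eq hσ hτ hg hx⟩
end
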